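/- arXiv:2401.05387 — 3 statements merged into one kernel-verified Lean document; each statement's English description precedes it below -/
import Mathlib

section
/- Let T>0 and let f,g:[0,T]×ℝ⁴→ℝ be continuous functions satisfying a Nagumo-type condition relative to the intervals [γ₁(t),Γ₁(t)] and [γ₂(t),Γ₂(t)] for all t∈[0,T]. Then there exist constants N₁,N₂>0 (depending only on γ₁,Γ₁,γ₂,Γ₂, the Nagumo functions φ,ψ, and T) such that every solution (z,w)∈(C²[0,T])² of the system z''(t)=f(t,z(t),w(t),z'(t),w'(t)), w''(t)=g(t,z(t),w(t),z'(t),w'(t)) on [0,T] with the periodic boundary conditions z(0)=z(T), z'(0)=z'(T), w(0)=w(T), w'(0)=w'(T), and satisfying γ₁(t)≤z(t)≤Γ₁(t) and γ₂(t)≤w(t)≤Γ₂(t) for all t∈[0,T], verifies max_{t∈[0,T]}|z'(t)|≤N₁ and max_{t∈[0,T]}|w'(t)|≤N₂. -/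
open intervalIntegral MeasureTheory Set ENNReal

lemma hasDerivAt_primitive' {F : ℝ → ℝ} (hF : Continuous F) (r : ℝ) :
    HasDerivAt (fun u => ∫ s in (0:ℝ)..u, F s) (F r) r :=
  intervalIntegral.integral_hasDerivAt_right (hF.intervalIntegrable 0 r)
    hF.aestronglyMeasurable.stronglyMeasurableAtFilter hF.continuousAt

lemma exists_N {F : ℝ → ℝ} (hF : Continuous F) (hpos : ∀ s, 0 < F s)
    (hdiv : (∫⁻ s in Set.Ici (0:ℝ), ENNReal.ofReal (1 / F s)) = ⊤) (T : ℝ) :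
    ∃ N : ℝ, 0 < N ∧ T < ∫ s in (0:ℝ)..N, 1 / F s := by
  by_contra h
  push_neg at h
  set G : ℝ → ℝ≥0∞ := fun s => ENNReal.ofReal (1 / F s) with hG
  have hGm : Measurable G := by
    apply ENNReal.measurable_ofReal.comp
    exact (continuous_const.div hF fun s => (hpos s).ne').measurable
  have hmono : Monotone (fun n : ℕ => (Set.Icc (0:ℝ) n).indicator G) := by
    intro m n hmn
    apply Set.indicator_le_indicator_of_subset
    · exact Set.Icc_subset_Icc le_rfl (by exact_mod_cast hmn)
    · intro x; exact zero_le
  have hsup : ∀ x, (Set.Ici (0:ℝ)).indicator G x = ⨆ n : ℕ, (Set.Icc (0:ℝ) n).indicator G x := by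
    intro x
    simp only [Set.indicator_apply, Set.mem_Ici, Set.mem_Icc]
    by_cases hx : 0 ≤ x
    · obtain ⟨n, hn⟩ := exists_nat_ge x
      simp only [hx, if_true, true_and]
      apply le_antisymm
      · refine le_iSup_of_le n ?_
        simp [hn]
      · exact iSup_le fun n => by split <;> simp
    · simp only [hx, if_false, false_and]
      simp
  have key : (∫⁻ s in Set.Ici (0:ℝ), G s) = ⨆ n : ℕ, ∫⁻ s in Set.Icc (0:ℝ) n, G s := by
    rw [← lintegral_indicator measurableSet_Ici]
    have : ∀ n : ℕ, (∫⁻ s in Set.Icc (0:ℝ) n, G s) = ∫⁻ s, (Set.Icc (0:ℝ) n).indicator G s := by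
      intro n; rw [lintegral_indicator measurableSet_Icc]
    simp_rw [this]
    rw [← lintegral_iSup (fun n => hGm.indicator measurableSet_Icc) hmono]
    congr 1; ext x; exact hsup x
  have hbd : ∀ n : ℕ, (∫⁻ s in Set.Icc (0:ℝ) n, G s) ≤ ENNReal.ofReal (max T 0) := by
    intro n
    have hint : IntegrableOn (fun s => 1 / F s) (Set.Icc (0:ℝ) n) :=
      (continuous_const.div hF fun s => (hpos s).ne').integrableOn_Icc
    rw [hG]
    rw [← MeasureTheory.ofReal_integral_eq_lintegral_ofReal hint
      (Filter.Eventually.of_forall fun s => (one_div_nonneg).mpr (hpos s).le)]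
    apply ENNReal.ofReal_le_ofReal
    rcases Nat.eq_zero_or_pos n with h0 | hn
    · simp [h0]
    · have hle : (0:ℝ) < n := by exact_mod_cast hn
      have : (∫ s in Set.Icc (0:ℝ) n, 1 / F s) = ∫ s in (0:ℝ)..n, 1 / F s := by
        rw [intervalIntegral.integral_of_le hle.le, MeasureTheory.integral_Icc_eq_integral_Ioc]
      rw [this]
      exact le_max_of_le_left (h _ hle)
  rw [key] at hdiv
  have : (⨆ n : ℕ, ∫⁻ s in Set.Icc (0:ℝ) n, G s) ≤ ENNReal.ofReal (max T 0) :=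
    iSup_le hbd
  rw [hdiv] at this
  exact (this.trans_lt ENNReal.ofReal_lt_top).ne rfl

lemma nagumo_bound {T N : ℝ} (hT : 0 ≤ T) {F : ℝ → ℝ} (hF : Continuous F)
    (hpos : ∀ s, 0 < F s) (heven : ∀ s, F (-s) = F s)
    (hN : T < ∫ s in (0:ℝ)..N, 1 / F s)
    {z : ℝ → ℝ} (hz : ContDiff ℝ 2 z)
    {t₀ : ℝ} (ht₀ : t₀ ∈ Set.Icc 0 T) (hz0 : deriv z t₀ = 0)
    (hbd : ∀ t ∈ Set.Icc 0 T, |deriv (deriv z) t| ≤ F (deriv z t)) :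
    ∀ t ∈ Set.Icc 0 T, |deriv z t| ≤ N := by
  set Φ : ℝ → ℝ := fun r => ∫ s in (0:ℝ)..r, 1 / F s with hΦdef
  have hinv : Continuous fun s => 1 / F s := continuous_const.div hF fun s => (hpos s).ne'
  have hd : ∀ r, HasDerivAt Φ (1 / F r) r := fun r => hasDerivAt_primitive' hinv r
  have hΦmono : StrictMono Φ := strictMono_of_deriv_pos fun r => by
    rw [(hd r).deriv]; exact one_div_pos.mpr (hpos r)
  have hΦ0 : Φ 0 = 0 := intervalIntegral.integral_same
  have hΦodd : ∀ r, Φ (-r) = -Φ r := by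
    intro r
    have h1 : (∫ s in (0:ℝ)..r, 1 / F (-s)) = ∫ s in (-r)..(0:ℝ), 1 / F s := by
      simpa using intervalIntegral.integral_comp_neg (a := (0:ℝ)) (b := r)
        (f := fun s => 1 / F s)
    have h2 : (∫ s in (0:ℝ)..r, 1 / F (-s)) = Φ r := by simp [heven, hΦdef]
    have h3 : Φ (-r) = -∫ s in (-r)..(0:ℝ), 1 / F s :=
      intervalIntegral.integral_symm _ _
    rw [h3, ← h1, h2]
  -- differentiability of deriv z
  have hz' : ContDiff ℝ 1 (deriv z) := by
    have h2 : ContDiff ℝ ((1:WithTop ℕ∞) + 1) z := by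
      rw [show ((1:WithTop ℕ∞) + 1) = 2 from rfl]; exact hz
    exact (contDiff_succ_iff_deriv.mp h2).2.2
  have hdiffz' : Differentiable ℝ (deriv z) := hz'.differentiable one_ne_zero
  have hder : ∀ t, HasDerivAt (fun t => Φ (deriv z t))
      (1 / F (deriv z t) * deriv (deriv z) t) t := fun t =>
    (hd (deriv z t)).comp t (hdiffz' t).hasDerivAt
  have hderh : ∀ t, HasDerivAt (fun t => Φ (deriv z t) - t)
      (1 / F (deriv z t) * deriv (deriv z) t - 1) t := fun t =>
    (hder t).sub (hasDerivAt_id t)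
  have hderk : ∀ t, HasDerivAt (fun t => Φ (deriv z t) + t)
      (1 / F (deriv z t) * deriv (deriv z) t + 1) t := fun t =>
    (hder t).add (hasDerivAt_id t)
  have hanti : AntitoneOn (fun t => Φ (deriv z t) - t) (Set.Icc 0 T) := by
    apply antitoneOn_of_deriv_nonpos (convex_Icc 0 T)
    · exact fun t _ => ((hderh t).differentiableAt.continuousAt).continuousWithinAt
    · exact fun t _ => ((hderh t).differentiableAt).differentiableWithinAt
    · intro t ht
      rw [interior_Icc] at ht
      rw [(hderh t).deriv]
      have h1 := (abs_le.mp (hbd t ⟨ht.1.le, ht.2.le⟩)).2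
      have h2 : 1 / F (deriv z t) * deriv (deriv z) t ≤ 1 := by
        rw [one_div, inv_mul_le_iff₀ (hpos _), mul_one]
        exact h1
      linarith
  have hmono : MonotoneOn (fun t => Φ (deriv z t) + t) (Set.Icc 0 T) := by
    apply monotoneOn_of_deriv_nonneg (convex_Icc 0 T)
    · exact fun t _ => ((hderk t).differentiableAt.continuousAt).continuousWithinAt
    · exact fun t _ => ((hderk t).differentiableAt).differentiableWithinAt
    · intro t ht
      rw [interior_Icc] at ht
      rw [(hderk t).deriv]
      have h1 := (abs_le.mp (hbd t ⟨ht.1.le, ht.2.le⟩)).1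
      have h2 : 1 / F (deriv z t) * -deriv (deriv z) t ≤ 1 := by
        rw [one_div, inv_mul_le_iff₀ (hpos _), mul_one]
        linarith
      rw [mul_neg] at h2
      linarith
  intro t ht
  have hbd2 : -T ≤ Φ (deriv z t) ∧ Φ (deriv z t) ≤ T := by
    rcases le_total t₀ t with hc | hc
    · have h1 := hanti ht₀ ht hc
      have h2 := hmono ht₀ ht hc
      simp only [hz0, hΦ0] at h1 h2
      exact ⟨by linarith [ht.2, ht₀.1], by linarith [ht.2, ht₀.1]⟩
    · have h1 := hanti ht ht₀ hc
      have h2 := hmono ht ht₀ hc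
      simp only [hz0, hΦ0] at h1 h2
      exact ⟨by linarith [ht₀.2, ht.1], by linarith [ht₀.2, ht.1]⟩
  by_contra hcon
  push_neg at hcon
  rcases le_or_gt 0 (deriv z t) with hs | hs
  · rw [abs_of_nonneg hs] at hcon
    have := hΦmono hcon
    linarith [hbd2.2]
  · rw [abs_of_neg hs] at hcon
    have h4 : deriv z t < -N := by linarith
    have h5 := hΦmono h4
    rw [hΦodd] at h5
    linarith [hbd2.1]



/-- The Nagumo-type condition for `f, g` relative to the intervals
`[γ₁(t), Γ₁(t)]` and `[γ₂(t), Γ₂(t)]`, with Nagumo functions `φ, ψ`. -/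
def NagumoCondition (T : ℝ) (f g : ℝ → ℝ → ℝ → ℝ → ℝ → ℝ)
    (γ₁ Γ₁ γ₂ Γ₂ : ℝ → ℝ) (φ ψ : ℝ → ℝ) : Prop :=
  ContinuousOn φ (Set.Ici 0) ∧ ContinuousOn ψ (Set.Ici 0) ∧
  (∀ s ∈ Set.Ici (0:ℝ), 0 < φ s) ∧ (∀ s ∈ Set.Ici (0:ℝ), 0 < ψ s) ∧
  (∫⁻ s in Set.Ici (0:ℝ), ENNReal.ofReal (1 / φ s)) = ⊤ ∧
  (∫⁻ s in Set.Ici (0:ℝ), ENNReal.ofReal (1 / ψ s)) = ⊤ ∧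
  (∀ t ∈ Set.Icc 0 T, ∀ z₀ w₀ z₁ w₁ : ℝ,
    γ₁ t ≤ z₀ → z₀ ≤ Γ₁ t → γ₂ t ≤ w₀ → w₀ ≤ Γ₂ t →
    |f t z₀ w₀ z₁ w₁| ≤ φ |z₁| ∧ |g t z₀ w₀ z₁ w₁| ≤ ψ |w₁|)

/-- A priori bounds on first derivatives for periodic solutions localized
between `γᵢ` and `Γᵢ`, under a Nagumo-type condition. -/
theorem stmt_0 (T : ℝ) (hT : 0 < T)
    (f g : ℝ → ℝ → ℝ → ℝ → ℝ → ℝ)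
    (hf : ContinuousOn (fun p : ℝ × ℝ × ℝ × ℝ × ℝ =>
      f p.1 p.2.1 p.2.2.1 p.2.2.2.1 p.2.2.2.2)
      (Set.Icc 0 T ×ˢ (Set.univ : Set (ℝ × ℝ × ℝ × ℝ))))
    (hg : ContinuousOn (fun p : ℝ × ℝ × ℝ × ℝ × ℝ =>
      g p.1 p.2.1 p.2.2.1 p.2.2.2.1 p.2.2.2.2)
      (Set.Icc 0 T ×ˢ (Set.univ : Set (ℝ × ℝ × ℝ × ℝ))))
    (γ₁ Γ₁ γ₂ Γ₂ : ℝ → ℝ)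
    (hγ₁ : ContDiff ℝ 1 γ₁) (hΓ₁ : ContDiff ℝ 1 Γ₁)
    (hγ₂ : ContDiff ℝ 1 γ₂) (hΓ₂ : ContDiff ℝ 1 Γ₂)
    (φ ψ : ℝ → ℝ)
    (hNag : NagumoCondition T f g γ₁ Γ₁ γ₂ Γ₂ φ ψ) :
    ∃ N₁ N₂ : ℝ, 0 < N₁ ∧ 0 < N₂ ∧
      ∀ z w : ℝ → ℝ, ContDiff ℝ 2 z → ContDiff ℝ 2 w →
        (∀ t ∈ Set.Icc 0 T,
          deriv (deriv z) t = f t (z t) (w t) (deriv z t) (deriv w t)) →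
        (∀ t ∈ Set.Icc 0 T,
          deriv (deriv w) t = g t (z t) (w t) (deriv z t) (deriv w t)) →
        z 0 = z T → deriv z 0 = deriv z T →
        w 0 = w T → deriv w 0 = deriv w T →
        (∀ t ∈ Set.Icc 0 T,
          γ₁ t ≤ z t ∧ z t ≤ Γ₁ t ∧ γ₂ t ≤ w t ∧ w t ≤ Γ₂ t) →
        ∀ t ∈ Set.Icc 0 T, |deriv z t| ≤ N₁ ∧ |deriv w t| ≤ N₂ := by
  obtain ⟨hφc, hψc, hφpos, hψpos, hφdiv, hψdiv, hfg⟩ := hNag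
  have hφ'c : Continuous fun r : ℝ => φ |r| := by
    rw [← continuousOn_univ]
    exact hφc.comp continuous_abs.continuousOn fun x _ => abs_nonneg x
  have hψ'c : Continuous fun r : ℝ => ψ |r| := by
    rw [← continuousOn_univ]
    exact hψc.comp continuous_abs.continuousOn fun x _ => abs_nonneg x
  have hφ'pos : ∀ s : ℝ, 0 < φ |s| := fun s => hφpos _ (abs_nonneg s)
  have hψ'pos : ∀ s : ℝ, 0 < ψ |s| := fun s => hψpos _ (abs_nonneg s)
  have hφ'div : (∫⁻ s in Set.Ici (0:ℝ), ENNReal.ofReal (1 / φ |s|)) = ⊤ := by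
    rw [← hφdiv]
    apply setLIntegral_congr_fun measurableSet_Ici
    exact fun s hs => by
      simp only [abs_of_nonneg (Set.mem_Ici.mp hs)]
  have hψ'div : (∫⁻ s in Set.Ici (0:ℝ), ENNReal.ofReal (1 / ψ |s|)) = ⊤ := by
    rw [← hψdiv]
    apply setLIntegral_congr_fun measurableSet_Ici
    exact fun s hs => by
      simp only [abs_of_nonneg (Set.mem_Ici.mp hs)]
  obtain ⟨N₁, hN₁pos, hN₁⟩ := exists_N hφ'c hφ'pos hφ'div T
  obtain ⟨N₂, hN₂pos, hN₂⟩ := exists_N hψ'c hψ'pos hψ'div T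
  refine ⟨N₁, N₂, hN₁pos, hN₂pos, ?_⟩
  intro z w hz hw heqz heqw hzper _ hwper _ hloc t ht
  obtain ⟨t₁, ht₁, hdz⟩ := exists_deriv_eq_zero hT (hz.continuous.continuousOn) hzper
  obtain ⟨t₂, ht₂, hdw⟩ := exists_deriv_eq_zero hT (hw.continuous.continuousOn) hwper
  constructor
  · refine nagumo_bound hT.le hφ'c hφ'pos (fun s => by rw [abs_neg]) hN₁ hz
      (Set.Ioo_subset_Icc_self ht₁) hdz ?_ t ht
    intro s hs
    rw [heqz s hs]
    obtain ⟨l1, l2, l3, l4⟩ := hloc s hs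
    exact (hfg s hs (z s) (w s) (deriv z s) (deriv w s) l1 l2 l3 l4).1
  · refine nagumo_bound hT.le hψ'c hψ'pos (fun s => by rw [abs_neg]) hN₂ hw
      (Set.Ioo_subset_Icc_self ht₂) hdw ?_ t ht
    intro s hs
    rw [heqw s hs]
    obtain ⟨l1, l2, l3, l4⟩ := hloc s hs
    exact (hfg s hs (z s) (w s) (deriv z s) (deriv w s) l1 l2 l3 l4).2
end

section
/- Let φ:[0,∞)→(0,∞) be continuous, T>0, and z∈C²([0,T]) with |z''(t)|≤φ(|z'(t)|) for all t∈[0,T]. Suppose there exists t₀∈[0,T] with z'(t₀)=0, and let N>0 satisfy ∫₀^N ds/φ(s) > T. Then |z'(t)|≤N for all t∈[0,T]. -/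
/-- Scalar a priori Nagumo-type bound: if |z''| ≤ φ(|z'|) on [0,T], z' vanishes
somewhere on [0,T], and ∫₀^N ds/φ(s) > T, then |z'| ≤ N on [0,T]. -/
theorem stmt_1 (φ : ℝ → ℝ) (hφcont : ContinuousOn φ (Set.Ici 0))
    (hφpos : ∀ s ∈ Set.Ici (0:ℝ), 0 < φ s)
    (T : ℝ) (hT : 0 < T) (z : ℝ → ℝ) (hz : ContDiff ℝ 2 z)
    (hbound : ∀ t ∈ Set.Icc 0 T, |deriv (deriv z) t| ≤ φ |deriv z t|)
    (t₀ : ℝ) (ht₀ : t₀ ∈ Set.Icc 0 T) (hz't₀ : deriv z t₀ = 0)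
    (N : ℝ) (hN : 0 < N) (hint : T < ∫ s in (0:ℝ)..N, 1 / φ s) :
    ∀ t ∈ Set.Icc 0 T, |deriv z t| ≤ N := by
  -- the integrand, extended evenly to all of ℝ
  set f : ℝ → ℝ := fun s => 1 / φ |s| with hf_def
  have hfpos : ∀ s, 0 < f s := fun s =>
    one_div_pos.mpr (hφpos _ (abs_nonneg s))
  have hfcont : Continuous f := by
    have habs : Continuous fun s : ℝ => φ |s| :=
      hφcont.comp_continuous continuous_abs fun x => Set.mem_Ici.mpr (abs_nonneg x)
    exact continuous_const.div habs fun x => (hφpos _ (Set.mem_Ici.mpr (abs_nonneg x))).ne'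
  set ψ : ℝ → ℝ := fun u => ∫ s in (0:ℝ)..u, f s with hψ_def
  have hψderiv : ∀ u, HasDerivAt ψ (f u) u := fun u =>
    (hfcont.integral_hasStrictDerivAt 0 u).hasDerivAt
  have hψ0 : ψ 0 = 0 := intervalIntegral.integral_same
  have hψmono : StrictMono ψ := by
    intro a b hab
    have : 0 < ∫ s in a..b, f s :=
      intervalIntegral.intervalIntegral_pos_of_pos (hfcont.intervalIntegrable a b) hfpos hab
    have hsub : ψ b - ψ a = ∫ s in a..b, f s :=
      intervalIntegral.integral_interval_sub_left (hfcont.intervalIntegrable 0 b)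
        (hfcont.intervalIntegrable 0 a)
    linarith
  have hψodd : ∀ u, ψ (-u) = -ψ u := by
    intro u
    have h1 : ψ (-u) = ∫ s in (0:ℝ)..(-u), f (-s) := by
      apply intervalIntegral.integral_congr
      intro s _
      simp [hf_def, abs_neg]
    rw [h1, intervalIntegral.integral_comp_neg f]
    simp [hψ_def, intervalIntegral.integral_symm u 0]
  have hψabs : ∀ u, ψ |u| = |ψ u| := by
    intro u
    rcases le_or_gt 0 u with h | h
    · rw [abs_of_nonneg h, abs_of_nonneg]
      rw [← hψ0]
      exact hψmono.monotone h
    · rw [abs_of_neg h, hψodd, abs_of_neg]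
      rw [← hψ0]
      exact hψmono (by linarith)
  -- derivative facts about v = deriv z
  set v : ℝ → ℝ := deriv z with hv_def
  have hv1 : ContDiff ℝ 1 v := by
    have := (contDiff_succ_iff_deriv (n := 1)).mp (by exact_mod_cast hz)
    exact this.2.2
  have hvd : ∀ t, HasDerivAt v (deriv v t) t := fun t =>
    ((hv1.differentiable one_ne_zero) t).hasDerivAt
  -- the composite g = ψ ∘ v is 1-Lipschitz on [0,T]
  set g : ℝ → ℝ := fun t => ψ (v t) with hg_def
  have hgd : ∀ t ∈ Set.Icc (0:ℝ) T, HasDerivWithinAt g (f (v t) * deriv v t) (Set.Icc 0 T) t :=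
    fun t _ => ((hψderiv (v t)).comp t (hvd t)).hasDerivWithinAt
  have hgbound : ∀ t ∈ Set.Icc (0:ℝ) T, ‖f (v t) * deriv v t‖ ≤ 1 := by
    intro t ht
    have hb := hbound t ht
    have hφv : 0 < φ |v t| := hφpos _ (Set.mem_Ici.mpr (abs_nonneg _))
    rw [Real.norm_eq_abs, abs_mul, abs_of_pos (hfpos (v t))]
    rw [hf_def]
    rw [div_mul_eq_mul_div, one_mul, div_le_one hφv]
    exact hb
  intro t ht
  have hlip : ‖g t - g t₀‖ ≤ 1 * ‖t - t₀‖ :=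
    (convex_Icc (0:ℝ) T).norm_image_sub_le_of_norm_hasDerivWithin_le hgd hgbound ht₀ ht
  have htt₀ : |t - t₀| ≤ T := by
    rw [abs_sub_le_iff]
    constructor <;> [linarith [ht.1, ht.2, ht₀.1, ht₀.2]; linarith [ht.1, ht.2, ht₀.1, ht₀.2]]
  have hgt₀ : g t₀ = 0 := by simp only [hg_def, hz't₀, hψ0]
  have hgle : |g t| ≤ T := by
    rw [hgt₀, sub_zero, one_mul] at hlip
    calc |g t| ≤ |t - t₀| := hlip
    _ ≤ T := htt₀
  -- ψ N equals the given integral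
  have hψN : ψ N = ∫ s in (0:ℝ)..N, 1 / φ s := by
    apply intervalIntegral.integral_congr
    intro s hs
    rw [Set.uIcc_of_le hN.le] at hs
    simp [hf_def, abs_of_nonneg hs.1]
  by_contra hcon
  push_neg at hcon
  have : ψ N < ψ |v t| := hψmono hcon
  rw [hψabs] at this
  have : ψ N ≤ T := le_trans this.le hgle
  rw [hψN] at this
  linarith
end

section
/- Under the hypotheses of the main theorem (lower and upper solutions (α₁,α₂),(β₁,β₂), Nagumo-type condition relative to [α₁⁰,β₁⁰],[α₂⁰,β₂⁰], f non-increasing in w₀ and g non-increasing in z₀), let N₁*,N₂*>0 be the a priori derivative bounds and suppose r₁,r₂>0 satisfy, for i=1,2, −rᵢ<αᵢ⁰(t)≤βᵢ⁰(t)<rᵢ for all t∈[0,T], together with: for all λ,μ∈[0,1] and t∈[0,T], λ·f(t,β₁⁰(t),β₂⁰(t),0,w₁)−β₁⁰(t)+r₁>0 and λ·f(t,α₁⁰(t),α₂⁰(t),0,w₁)−α₁⁰(t)−r₁<0 whenever |w₁|≤N₂*, and μ·g(t,β₁⁰(t),β₂⁰(t),z₁,0)−β₂⁰(t)+r₂>0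 and μ·g(t,α₁⁰(t),α₂⁰(t),z₁,0)−α₂⁰(t)−r₂<0 whenever |z₁|≤N₁*. Then every solution (z,w)∈(C²[0,T])² of the auxiliary problem (AP) with periodic boundary conditions (PBC) verifies |z(t)|<r₁ and |w(t)|<r₂ for all t∈[0,T], independently of λ,μ∈[0,1]. -/
/-- Sup norm of `α` on `[0,T]`: `‖α‖ = max_{t ∈ [0,T]} |α(t)|`. -/
noncomputable def supNorm (T : ℝ) (α : ℝ → ℝ) : ℝ :=
  sSup ((fun t => |α t|) '' Set.Icc 0 T)

/-- The shift `α⁰ := α − ‖α‖` used for lower solutions. -/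
noncomputable def lowShift (T : ℝ) (α : ℝ → ℝ) : ℝ → ℝ :=
  fun t => α t - supNorm T α

/-- The shift `β⁰ := β + ‖β‖` used for upper solutions. -/
noncomputable def upShift (T : ℝ) (β : ℝ → ℝ) : ℝ → ℝ :=
  fun t => β t + supNorm T β

/-- Periodic boundary conditions on `[0,T]`. -/
def PBC (T : ℝ) (z w : ℝ → ℝ) : Prop :=
  z 0 = z T ∧ deriv z 0 = deriv z T ∧ w 0 = w T ∧ deriv w 0 = deriv w T

/-- `(α₁, α₂)` is a lower solution of the periodic problem. -/
noncomputable def IsLowerSolution (T : ℝ) (f g : ℝ → ℝ → ℝ → ℝ → ℝ → ℝ)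
    (α₁ α₂ : ℝ → ℝ) : Prop :=
  ContDiff ℝ 2 α₁ ∧ ContDiff ℝ 2 α₂ ∧
  (∀ t ∈ Set.Icc 0 T, ∀ w₁ : ℝ,
    f t (lowShift T α₁ t) (lowShift T α₂ t) (deriv α₁ t) w₁ ≤ deriv (deriv α₁) t) ∧
  (∀ t ∈ Set.Icc 0 T, ∀ z₁ : ℝ,
    g t (lowShift T α₁ t) (lowShift T α₂ t) z₁ (deriv α₂ t) ≤ deriv (deriv α₂) t) ∧
  α₁ 0 = α₁ T ∧ α₂ 0 = α₂ T ∧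
  deriv α₁ T ≤ deriv α₁ 0 ∧ deriv α₂ T ≤ deriv α₂ 0

/-- `(β₁, β₂)` is an upper solution of the periodic problem. -/
noncomputable def IsUpperSolution (T : ℝ) (f g : ℝ → ℝ → ℝ → ℝ → ℝ → ℝ)
    (β₁ β₂ : ℝ → ℝ) : Prop :=
  ContDiff ℝ 2 β₁ ∧ ContDiff ℝ 2 β₂ ∧
  (∀ t ∈ Set.Icc 0 T, ∀ w₁ : ℝ,
    deriv (deriv β₁) t ≤ f t (upShift T β₁ t) (upShift T β₂ t) (deriv β₁ t) w₁) ∧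
  (∀ t ∈ Set.Icc 0 T, ∀ z₁ : ℝ,
    deriv (deriv β₂) t ≤ g t (upShift T β₁ t) (upShift T β₂ t) z₁ (deriv β₂ t)) ∧
  β₁ 0 = β₁ T ∧ β₂ 0 = β₂ T ∧
  deriv β₁ 0 ≤ deriv β₁ T ∧ deriv β₂ 0 ≤ deriv β₂ T

/-- The truncation operator `δ` associated with lower bound `lo` and upper
bound `hi`. -/
noncomputable def trunc (lo hi : ℝ → ℝ) (t x : ℝ) : ℝ :=
  if hi t < x then hi t else if x < lo t then lo t else x

/-- `(z,w)` is a solution of the truncated, perturbed, homotopic auxiliary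
problem (AP) with parameters `lam, mu`, associated with lower solutions
`(α₁, α₂)` and upper solutions `(β₁, β₂)`. -/
noncomputable def IsAPSolution (T : ℝ) (f g : ℝ → ℝ → ℝ → ℝ → ℝ → ℝ)
    (α₁ α₂ β₁ β₂ : ℝ → ℝ) (lam mu : ℝ) (z w : ℝ → ℝ) : Prop :=
  ContDiff ℝ 2 z ∧ ContDiff ℝ 2 w ∧
  (∀ t ∈ Set.Icc 0 T,
    deriv (deriv z) t - z t =
      lam * f t (trunc (lowShift T α₁) (upShift T β₁) t (z t))
                (trunc (lowShift T α₂) (upShift T β₂) t (w t))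
                (deriv z t) (deriv w t)
        - lam * trunc (lowShift T α₁) (upShift T β₁) t (z t)) ∧
  (∀ t ∈ Set.Icc 0 T,
    deriv (deriv w) t - w t =
      mu * g t (trunc (lowShift T α₁) (upShift T β₁) t (z t))
               (trunc (lowShift T α₂) (upShift T β₂) t (w t))
               (deriv z t) (deriv w t)
        - mu * trunc (lowShift T α₂) (upShift T β₂) t (w t))

section Helpers
open Set Filter

lemma deriv_nonpos_of_isMaxOn_right {u : ℝ → ℝ} {a b : ℝ} (hu : DifferentiableAt ℝ u a)
    (hab : a < b) (h : ∀ t ∈ Set.Icc a b, u t ≤ u a) : deriv u a ≤ 0 := by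
  have hs := hasDerivAt_iff_tendsto_slope.mp hu.hasDerivAt
  have hs' : Tendsto (slope u a) (nhdsWithin a (Ioi a)) (nhds (deriv u a)) :=
    hs.mono_left (nhdsWithin_mono _ (fun x hx => ne_of_gt hx))
  refine le_of_tendsto hs' ?_
  filter_upwards [Ioc_mem_nhdsGT_of_mem ⟨le_refl a, hab⟩] with t ht
  rw [slope_def_field]
  exact div_nonpos_of_nonpos_of_nonneg (sub_nonpos.2 (h t ⟨ht.1.le, ht.2⟩)) (sub_nonneg.2 ht.1.le)

lemma deriv_nonneg_of_isMaxOn_left {u : ℝ → ℝ} {a b : ℝ} (hu : DifferentiableAt ℝ u b)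
    (hab : a < b) (h : ∀ t ∈ Set.Icc a b, u t ≤ u b) : 0 ≤ deriv u b := by
  have hs := hasDerivAt_iff_tendsto_slope.mp hu.hasDerivAt
  have hs' : Tendsto (slope u b) (nhdsWithin b (Iio b)) (nhds (deriv u b)) :=
    hs.mono_left (nhdsWithin_mono _ (fun x hx => ne_of_lt hx))
  refine ge_of_tendsto hs' ?_
  filter_upwards [Ico_mem_nhdsLT_of_mem ⟨hab, le_refl b⟩] with t ht
  rw [slope_def_field]
  exact div_nonneg_of_nonpos (sub_nonpos.2 (h t ⟨ht.1, ht.2.le⟩)) (sub_nonpos.2 ht.2.le)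

lemma second_deriv_nonpos_at_max {u : ℝ → ℝ} {t₀ T : ℝ} (hu : ContDiff ℝ 2 u)
    (ht₀ : t₀ ∈ Set.Ico 0 T) (hd : deriv u t₀ = 0)
    (hmax : ∀ t ∈ Set.Icc 0 T, u t ≤ u t₀) : deriv (deriv u) t₀ ≤ 0 := by
  by_contra h
  push_neg at h
  have hud : Differentiable ℝ u := hu.differentiable (by norm_num)
  have hu' : ContDiff ℝ ((1:ℕ) + 1) u := by exact_mod_cast hu
  have hd1 : ContDiff ℝ 1 (deriv u) := (contDiff_succ_iff_deriv.mp hu').2.2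
  have hdd : DifferentiableAt ℝ (deriv u) t₀ :=
    (hd1.differentiable one_ne_zero).differentiableAt
  have hs := hasDerivAt_iff_tendsto_slope.mp hdd.hasDerivAt
  have hs' : Tendsto (slope (deriv u) t₀) (nhdsWithin t₀ (Set.Ioi t₀)) (nhds (deriv (deriv u) t₀)) :=
    hs.mono_left (nhdsWithin_mono _ (fun x hx => ne_of_gt hx))
  have hev : ∀ᶠ x in nhdsWithin t₀ (Set.Ioi t₀), 0 < slope (deriv u) t₀ x :=
    hs'.eventually (eventually_gt_nhds h)
  obtain ⟨b, hb, hb2⟩ := mem_nhdsGT_iff_exists_Ioo_subset.mp hev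
  set c := min b T with hc
  have htc : t₀ < c := lt_min hb ht₀.2
  have hpos : ∀ x ∈ interior (Set.Icc t₀ c), 0 < deriv u x := by
    intro x hx
    rw [interior_Icc] at hx
    have hsl : 0 < slope (deriv u) t₀ x := hb2 ⟨hx.1, lt_of_lt_of_le hx.2 (min_le_left _ _)⟩
    rw [slope_def_field, hd, sub_zero] at hsl
    have := mul_pos hsl (sub_pos.2 hx.1)
    rwa [div_mul_cancel₀] at this
    exact ne_of_gt (sub_pos.2 hx.1)
  have hmono := strictMonoOn_of_deriv_pos (convex_Icc t₀ c) hud.continuous.continuousOn hpos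
  have hlt : u t₀ < u c := hmono ⟨le_refl _, htc.le⟩ ⟨htc.le, le_refl _⟩ htc
  exact absurd (hmax c ⟨le_trans ht₀.1 htc.le, min_le_right _ _⟩) (not_le.2 hlt)

lemma exists_max_point {u : ℝ → ℝ} {T : ℝ} (hT : 0 < T) (hu : ContDiff ℝ 2 u)
    (hper : u 0 = u T) (hder : deriv u 0 = deriv u T) :
    ∃ t₀ ∈ Set.Icc 0 T, (∀ t ∈ Set.Icc 0 T, u t ≤ u t₀) ∧
      deriv u t₀ = 0 ∧ deriv (deriv u) t₀ ≤ 0 := by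
  have hud : Differentiable ℝ u := hu.differentiable (by norm_num)
  obtain ⟨t₁, ht₁, hmax₁⟩ := isCompact_Icc.exists_isMaxOn (Set.nonempty_Icc.2 hT.le)
    hud.continuous.continuousOn
  have hmax₁' : ∀ t ∈ Set.Icc 0 T, u t ≤ u t₁ := fun t ht => hmax₁ ht
  by_cases hT1 : t₁ = T
  · -- max also at 0
    have hmax0 : ∀ t ∈ Set.Icc 0 T, u t ≤ u 0 := by
      intro t ht; rw [hper, ← hT1]; exact hmax₁' t ht
    have hd0 : deriv u 0 = 0 := by
      have h1 : deriv u 0 ≤ 0 := deriv_nonpos_of_isMaxOn_right hud.differentiableAt hT hmax0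
      have h2 : 0 ≤ deriv u T := deriv_nonneg_of_isMaxOn_left hud.differentiableAt hT
        (by intro t ht; exact hT1 ▸ hmax₁' t ht)
      rw [hder] at h1; rw [← hder] at h2; exact le_antisymm (hder ▸ h1) h2
    exact ⟨0, Set.left_mem_Icc.2 hT.le, hmax0, hd0,
      second_deriv_nonpos_at_max hu ⟨le_refl 0, hT⟩ hd0 hmax0⟩
  · have ht₁' : t₁ ∈ Set.Ico 0 T := ⟨ht₁.1, lt_of_le_of_ne ht₁.2 hT1⟩
    have hd0 : deriv u t₁ = 0 := by
      by_cases h0 : t₁ = 0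
      · subst h0
        have h1 : deriv u 0 ≤ 0 := deriv_nonpos_of_isMaxOn_right hud.differentiableAt hT hmax₁'
        have h2 : 0 ≤ deriv u T := deriv_nonneg_of_isMaxOn_left hud.differentiableAt hT
          (by intro t ht; rw [← hper]; exact hmax₁' t ht)
        rw [← hder] at h2; exact le_antisymm h1 h2
      · have hI : t₁ ∈ Set.Ioo 0 T := ⟨lt_of_le_of_ne ht₁.1 (Ne.symm h0), ht₁'.2⟩
        have : IsLocalMax u t₁ := hmax₁.isLocalMax (Icc_mem_nhds hI.1 hI.2)
        exact this.deriv_eq_zero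
    exact ⟨t₁, ht₁, hmax₁', hd0, second_deriv_nonpos_at_max hu ht₁' hd0 hmax₁'⟩

lemma exists_min_point {u : ℝ → ℝ} {T : ℝ} (hT : 0 < T) (hu : ContDiff ℝ 2 u)
    (hper : u 0 = u T) (hder : deriv u 0 = deriv u T) :
    ∃ t₀ ∈ Set.Icc 0 T, (∀ t ∈ Set.Icc 0 T, u t₀ ≤ u t) ∧
      deriv u t₀ = 0 ∧ 0 ≤ deriv (deriv u) t₀ := by
  have hdneg : deriv (fun t => -u t) = fun t => -deriv u t := funext fun x => deriv.neg
  obtain ⟨t₀, ht₀, hmax, hd, hdd⟩ := exists_max_point hT hu.neg (by simp [hper])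
    (by rw [hdneg]; simp [hder])
  rw [hdneg] at hd hdd
  simp only at hd
  have hdd' : deriv (fun t => -deriv u t) t₀ = -(deriv (deriv u) t₀) := deriv.neg
  rw [hdd'] at hdd
  exact ⟨t₀, ht₀, fun t ht => neg_le_neg_iff.mp (hmax t ht), by linarith, by linarith⟩

lemma abs_le_supNorm {T : ℝ} {α : ℝ → ℝ} (hα : Continuous α) {t : ℝ}
    (ht : t ∈ Set.Icc 0 T) : |α t| ≤ sSup ((fun t => |α t|) '' Set.Icc 0 T) :=
  le_csSup (isCompact_Icc.image (continuous_abs.comp hα)).bddAbove ⟨t, ht, rfl⟩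

lemma trunc_mem {lo hi : ℝ → ℝ} {t x : ℝ} (h : lo t ≤ hi t) :
    lo t ≤ trunc lo hi t x ∧ trunc lo hi t x ≤ hi t := by
  unfold trunc; split_ifs with h1 h2 <;> constructor <;> linarith

lemma sInf_deriv_nonpos {T : ℝ} {α : ℝ → ℝ} (hT : 0 < T) (hα : ContDiff ℝ 2 α)
    (hper : α 0 = α T) :
    sInf (deriv α '' Set.Icc 0 T) ≤ 0 ∧ 0 ≤ sSup (deriv α '' Set.Icc 0 T) := by
  obtain ⟨c, hc, hc0⟩ := exists_deriv_eq_zero hT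
    (hα.continuous.continuousOn) hper
  have hcm : deriv α c ∈ deriv α '' Set.Icc 0 T := ⟨c, ⟨hc.1.le, hc.2.le⟩, rfl⟩
  have hcomp : IsCompact (deriv α '' Set.Icc 0 T) :=
    isCompact_Icc.image (hα.continuous_deriv (by norm_num))
  exact ⟨by simpa [hc0] using csInf_le hcomp.bddBelow hcm,
    by simpa [hc0] using le_csSup hcomp.bddAbove hcm⟩

end Helpers

set_option maxHeartbeats 1000000 in
/-- Claim 1: under the hypotheses of the main theorem, with a priori derivative
bounds `N₁*, N₂*` and constants `r₁, r₂` satisfying the strict sign conditions,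
every solution of the auxiliary problem (AP) with periodic boundary conditions
satisfies `|z(t)| < r₁` and `|w(t)| < r₂`, independently of `λ, μ ∈ [0,1]`. -/
theorem stmt_3
    (T : ℝ) (hT : 0 < T)
    (f g : ℝ → ℝ → ℝ → ℝ → ℝ → ℝ)
    (hf : ContinuousOn (fun p : ℝ × ℝ × ℝ × ℝ × ℝ =>
      f p.1 p.2.1 p.2.2.1 p.2.2.2.1 p.2.2.2.2)
      (Set.Icc 0 T ×ˢ (Set.univ : Set (ℝ × ℝ × ℝ × ℝ))))
    (hg : ContinuousOn (fun p : ℝ × ℝ × ℝ × ℝ × ℝ =>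
      g p.1 p.2.1 p.2.2.1 p.2.2.2.1 p.2.2.2.2)
      (Set.Icc 0 T ×ˢ (Set.univ : Set (ℝ × ℝ × ℝ × ℝ))))
    (α₁ α₂ β₁ β₂ : ℝ → ℝ)
    (hlow : IsLowerSolution T f g α₁ α₂)
    (hupp : IsUpperSolution T f g β₁ β₂)
    (φ ψ : ℝ → ℝ)
    (hNag : NagumoCondition T f g (lowShift T α₁) (upShift T β₁)
      (lowShift T α₂) (upShift T β₂) φ ψ)
    (hfmono : ∀ t ∈ Set.Icc 0 T, ∀ z₀ z₁ w₁ : ℝ,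
      min (sInf (deriv α₁ '' Set.Icc 0 T)) (sInf (deriv β₁ '' Set.Icc 0 T)) ≤ z₁ →
      z₁ ≤ max (sSup (deriv α₁ '' Set.Icc 0 T)) (sSup (deriv β₁ '' Set.Icc 0 T)) →
      ∀ w₀ w₀' : ℝ, w₀ ≤ w₀' → f t z₀ w₀' z₁ w₁ ≤ f t z₀ w₀ z₁ w₁)
    (hgmono : ∀ t ∈ Set.Icc 0 T, ∀ w₀ z₁ w₁ : ℝ,
      min (sInf (deriv α₂ '' Set.Icc 0 T)) (sInf (deriv β₂ '' Set.Icc 0 T)) ≤ w₁ →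
      w₁ ≤ max (sSup (deriv α₂ '' Set.Icc 0 T)) (sSup (deriv β₂ '' Set.Icc 0 T)) →
      ∀ z₀ z₀' : ℝ, z₀ ≤ z₀' → g t z₀' w₀ z₁ w₁ ≤ g t z₀ w₀ z₁ w₁)
    (N₁' N₂' : ℝ) (hN₁' : 0 < N₁') (hN₂' : 0 < N₂')
    (hapriori : ∀ lam ∈ Set.Icc (0:ℝ) 1, ∀ mu ∈ Set.Icc (0:ℝ) 1, ∀ z w : ℝ → ℝ,
      IsAPSolution T f g α₁ α₂ β₁ β₂ lam mu z w → PBC T z w →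
      ∀ t ∈ Set.Icc 0 T, |deriv z t| ≤ N₁' ∧ |deriv w t| ≤ N₂')
    (r₁ r₂ : ℝ) (hr₁ : 0 < r₁) (hr₂ : 0 < r₂)
    (hrbound : ∀ t ∈ Set.Icc 0 T,
      -r₁ < lowShift T α₁ t ∧ lowShift T α₁ t ≤ upShift T β₁ t ∧ upShift T β₁ t < r₁ ∧
      -r₂ < lowShift T α₂ t ∧ lowShift T α₂ t ≤ upShift T β₂ t ∧ upShift T β₂ t < r₂)
    (hsign_f : ∀ lam ∈ Set.Icc (0:ℝ) 1, ∀ t ∈ Set.Icc 0 T, ∀ w₁ : ℝ, |w₁| ≤ N₂' →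
      0 < lam * f t (upShift T β₁ t) (upShift T β₂ t) 0 w₁ - upShift T β₁ t + r₁ ∧
      lam * f t (lowShift T α₁ t) (lowShift T α₂ t) 0 w₁ - lowShift T α₁ t - r₁ < 0)
    (hsign_g : ∀ mu ∈ Set.Icc (0:ℝ) 1, ∀ t ∈ Set.Icc 0 T, ∀ z₁ : ℝ, |z₁| ≤ N₁' →
      0 < mu * g t (upShift T β₁ t) (upShift T β₂ t) z₁ 0 - upShift T β₂ t + r₂ ∧
      mu * g t (lowShift T α₁ t) (lowShift T α₂ t) z₁ 0 - lowShift T α₂ t - r₂ < 0) :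
    ∀ lam ∈ Set.Icc (0:ℝ) 1, ∀ mu ∈ Set.Icc (0:ℝ) 1, ∀ z w : ℝ → ℝ,
      IsAPSolution T f g α₁ α₂ β₁ β₂ lam mu z w → PBC T z w →
      ∀ t ∈ Set.Icc 0 T, |z t| < r₁ ∧ |w t| < r₂ := by
  intro lam hlam mu hmu z w hap hpbc
  obtain ⟨hz2, hw2, heqz, heqw⟩ := hap
  obtain ⟨hzp, hzdp, hwp, hwdp⟩ := hpbc
  have hder := hapriori lam hlam mu hmu z w ⟨hz2, hw2, heqz, heqw⟩ ⟨hzp, hzdp, hwp, hwdp⟩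
  obtain ⟨hα₁c, hα₂c, _, _, hα₁per, hα₂per, _, _⟩ := hlow
  obtain ⟨hβ₁c, hβ₂c, _, _, hβ₁per, hβ₂per, _, _⟩ := hupp
  have hshiftU : ∀ (β : ℝ → ℝ), ContDiff ℝ 2 β → ∀ t ∈ Set.Icc 0 T, 0 ≤ upShift T β t := by
    intro β hβ t ht
    have h1 := abs_le_supNorm hβ.continuous (T := T) ht
    have h2 : -β t ≤ |β t| := neg_le_abs _
    unfold upShift supNorm
    linarith
  have hshiftL : ∀ (α : ℝ → ℝ), ContDiff ℝ 2 α → ∀ t ∈ Set.Icc 0 T, lowShift T α t ≤ 0 := by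
    intro α hα t ht
    have h1 := abs_le_supNorm hα.continuous (T := T) ht
    have h2 : α t ≤ |α t| := le_abs_self _
    unfold lowShift supNorm
    linarith
  have h01 := sInf_deriv_nonpos hT hα₁c hα₁per
  have h02 := sInf_deriv_nonpos hT hα₂c hα₂per
  have hz1lo : min (sInf (deriv α₁ '' Set.Icc 0 T)) (sInf (deriv β₁ '' Set.Icc 0 T)) ≤ 0 :=
    le_trans (min_le_left _ _) h01.1
  have hz1hi : (0:ℝ) ≤ max (sSup (deriv α₁ '' Set.Icc 0 T)) (sSup (deriv β₁ '' Set.Icc 0 T)) :=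
    le_trans h01.2 (le_max_left _ _)
  have hw1lo : min (sInf (deriv α₂ '' Set.Icc 0 T)) (sInf (deriv β₂ '' Set.Icc 0 T)) ≤ 0 :=
    le_trans (min_le_left _ _) h02.1
  have hw1hi : (0:ℝ) ≤ max (sSup (deriv α₂ '' Set.Icc 0 T)) (sSup (deriv β₂ '' Set.Icc 0 T)) :=
    le_trans h02.2 (le_max_left _ _)
  have hlam0 : (0:ℝ) ≤ lam := hlam.1
  have hlam1 : lam ≤ 1 := hlam.2
  have hmu0 : (0:ℝ) ≤ mu := hmu.1
  have hmu1 : mu ≤ 1 := hmu.2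
  -- upper bound for z
  have hzU : ∀ t ∈ Set.Icc 0 T, z t < r₁ := by
    obtain ⟨t₀, ht₀, hmax, hd0, hdd⟩ := exists_max_point hT hz2 hzp hzdp
    have hkey : z t₀ < r₁ := by
      by_contra hge
      push_neg at hge
      have hub := hrbound t₀ ht₀
      have heq := heqz t₀ ht₀
      have htr1 : trunc (lowShift T α₁) (upShift T β₁) t₀ (z t₀) = upShift T β₁ t₀ := by
        unfold trunc; rw [if_pos (lt_of_lt_of_le hub.2.2.1 hge)]
      rw [hd0, htr1] at heq
      have hX₂ := trunc_mem (lo := lowShift T α₂) (hi := upShift T β₂) (t := t₀)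
        (x := w t₀) hub.2.2.2.2.1
      have hm : f t₀ (upShift T β₁ t₀) (upShift T β₂ t₀) 0 (deriv w t₀) ≤
          f t₀ (upShift T β₁ t₀) (trunc (lowShift T α₂) (upShift T β₂) t₀ (w t₀)) 0
            (deriv w t₀) :=
        hfmono t₀ ht₀ _ 0 (deriv w t₀) hz1lo hz1hi _ _ hX₂.2
      have hsf := (hsign_f lam hlam t₀ ht₀ (deriv w t₀) (hder t₀ ht₀).2).1
      have hmul := mul_le_mul_of_nonneg_left hm hlam0
      have hprod : 0 ≤ upShift T β₁ t₀ - lam * upShift T β₁ t₀ := by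
        nlinarith [mul_nonneg (sub_nonneg.2 hlam1) (hshiftU β₁ hβ₁c t₀ ht₀)]
      linarith
    intro t ht
    exact lt_of_le_of_lt (hmax t ht) hkey
  -- lower bound for z
  have hzL : ∀ t ∈ Set.Icc 0 T, -r₁ < z t := by
    obtain ⟨t₀, ht₀, hmin, hd0, hdd⟩ := exists_min_point hT hz2 hzp hzdp
    have hkey : -r₁ < z t₀ := by
      by_contra hge
      push_neg at hge
      have hub := hrbound t₀ ht₀
      have heq := heqz t₀ ht₀
      have hlt : z t₀ < lowShift T α₁ t₀ := lt_of_le_of_lt hge hub.1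
      have htr1 : trunc (lowShift T α₁) (upShift T β₁) t₀ (z t₀) = lowShift T α₁ t₀ := by
        unfold trunc
        rw [if_neg (by linarith [hub.2.1]), if_pos hlt]
      rw [hd0, htr1] at heq
      have hX₂ := trunc_mem (lo := lowShift T α₂) (hi := upShift T β₂) (t := t₀)
        (x := w t₀) hub.2.2.2.2.1
      have hm : f t₀ (lowShift T α₁ t₀)
            (trunc (lowShift T α₂) (upShift T β₂) t₀ (w t₀)) 0 (deriv w t₀) ≤
          f t₀ (lowShift T α₁ t₀) (lowShift T α₂ t₀) 0 (deriv w t₀) :=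
        hfmono t₀ ht₀ _ 0 (deriv w t₀) hz1lo hz1hi _ _ hX₂.1
      have hsf := (hsign_f lam hlam t₀ ht₀ (deriv w t₀) (hder t₀ ht₀).2).2
      have hmul := mul_le_mul_of_nonneg_left hm hlam0
      have hprod : lowShift T α₁ t₀ - lam * lowShift T α₁ t₀ ≤ 0 := by
        nlinarith [mul_nonneg (sub_nonneg.2 hlam1) (neg_nonneg.2 (hshiftL α₁ hα₁c t₀ ht₀))]
      linarith
    intro t ht
    exact lt_of_lt_of_le hkey (hmin t ht)
  -- upper bound for w
  have hwU : ∀ t ∈ Set.Icc 0 T, w t < r₂ := by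
    obtain ⟨t₀, ht₀, hmax, hd0, hdd⟩ := exists_max_point hT hw2 hwp hwdp
    have hkey : w t₀ < r₂ := by
      by_contra hge
      push_neg at hge
      have hub := hrbound t₀ ht₀
      have heq := heqw t₀ ht₀
      have htr2 : trunc (lowShift T α₂) (upShift T β₂) t₀ (w t₀) = upShift T β₂ t₀ := by
        unfold trunc; rw [if_pos (lt_of_lt_of_le hub.2.2.2.2.2 hge)]
      rw [hd0, htr2] at heq
      have hX₁ := trunc_mem (lo := lowShift T α₁) (hi := upShift T β₁) (t := t₀)
        (x := z t₀) hub.2.1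
      have hm : g t₀ (upShift T β₁ t₀) (upShift T β₂ t₀) (deriv z t₀) 0 ≤
          g t₀ (trunc (lowShift T α₁) (upShift T β₁) t₀ (z t₀)) (upShift T β₂ t₀)
            (deriv z t₀) 0 :=
        hgmono t₀ ht₀ _ (deriv z t₀) 0 hw1lo hw1hi _ _ hX₁.2
      have hsg := (hsign_g mu hmu t₀ ht₀ (deriv z t₀) (hder t₀ ht₀).1).1
      have hmul := mul_le_mul_of_nonneg_left hm hmu0
      have hprod : 0 ≤ upShift T β₂ t₀ - mu * upShift T β₂ t₀ := by
        nlinarith [mul_nonneg (sub_nonneg.2 hmu1) (hshiftU β₂ hβ₂c t₀ ht₀)]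
      linarith
    intro t ht
    exact lt_of_le_of_lt (hmax t ht) hkey
  -- lower bound for w
  have hwL : ∀ t ∈ Set.Icc 0 T, -r₂ < w t := by
    obtain ⟨t₀, ht₀, hmin, hd0, hdd⟩ := exists_min_point hT hw2 hwp hwdp
    have hkey : -r₂ < w t₀ := by
      by_contra hge
      push_neg at hge
      have hub := hrbound t₀ ht₀
      have heq := heqw t₀ ht₀
      have hlt : w t₀ < lowShift T α₂ t₀ := lt_of_le_of_lt hge hub.2.2.2.1
      have htr2 : trunc (lowShift T α₂) (upShift T β₂) t₀ (w t₀) = lowShift T α₂ t₀ := by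
        unfold trunc
        rw [if_neg (by linarith [hub.2.2.2.2.1]), if_pos hlt]
      rw [hd0, htr2] at heq
      have hX₁ := trunc_mem (lo := lowShift T α₁) (hi := upShift T β₁) (t := t₀)
        (x := z t₀) hub.2.1
      have hm : g t₀ (trunc (lowShift T α₁) (upShift T β₁) t₀ (z t₀))
            (lowShift T α₂ t₀) (deriv z t₀) 0 ≤
          g t₀ (lowShift T α₁ t₀) (lowShift T α₂ t₀) (deriv z t₀) 0 :=
        hgmono t₀ ht₀ _ (deriv z t₀) 0 hw1lo hw1hi _ _ hX₁.1
      have hsg := (hsign_g mu hmu t₀ ht₀ (deriv z t₀) (hder t₀ ht₀).1).2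
      have hmul := mul_le_mul_of_nonneg_left hm hmu0
      have hprod : lowShift T α₂ t₀ - mu * lowShift T α₂ t₀ ≤ 0 := by
        nlinarith [mul_nonneg (sub_nonneg.2 hmu1) (neg_nonneg.2 (hshiftL α₂ hα₂c t₀ ht₀))]
      linarith
    intro t ht
    exact lt_of_lt_of_le hkey (hmin t ht)
  intro t ht
  exact ⟨abs_lt.2 ⟨hzL t ht, hzU t ht⟩, abs_lt.2 ⟨hwL t ht, hwU t ht⟩⟩
end
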